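/- arXiv:1411.6100 — 2 statements merged into one kernel-verified Lean document; each statement's English description precedes it below -/
import Mathlib

section
/- Let γ be a simple regular closed curve in ℝ², positively oriented, parametrized by arc length, of class C¹ and piecewise C², whose signed curvature changes sign only finitely many times, and suppose γ belongs to the class K_π: every maximal convex arc of γ has total curvature strictly greater than π, and every maximal concave arc of γ has total curvature strictly between −π and 0. Then for every subarc of γ (the restriction of γ to any interval [a, b] with b − a at most the length of γ), the total curvature ∫_a^b k(s) ds is strictly greater than −π. -/
open MeasureTheory Set Real Filter
open scoped RealInnerProductSpace Topology

noncomputable section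

/-- Points of the Euclidean plane. -/
abbrev Pt : Type := EuclideanSpace ℝ (Fin 2)

/-- Rotation by `π/2`; applied to the unit tangent `t` it produces the unit normal `n`
such that the pair `(t, n)` is positively oriented. -/
def rot90 (v : Pt) : Pt := WithLp.toLp 2 ![-(v 1), v 0]

/-- The union of the bounded connected components of the complement of `S`.
For (the image of) a Jordan curve this is the bounded open region `Ω_γ` enclosed
by the curve. -/
def boundedComplement (S : Set Pt) : Set Pt :=
  {x | x ∉ S ∧ Bornology.IsBounded (connectedComponentIn Sᶜ x)}

/-- A simple regular closed curve of Sobolev class `W^{2,2}`, parametrized by arc length,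
encoded as an `L`-periodic map `ℝ → ℝ²`.  The field `tang` is the derivative `γ'`
(continuous, by the Sobolev embedding `W^{2,2} ↪ C¹`), `k` is the signed curvature,
defined through `γ'' = k • n` with `n = rot90 ∘ γ'`, and the field `sobolev` states that
`γ'` is the (absolutely continuous) primitive of `γ'' = k • n`, with `∫ k² < ∞`. -/
structure ClosedCurveW22 where
  /-- the length of the curve -/
  L : ℝ
  L_pos : 0 < L
  /-- the curve, as an `L`-periodic map -/
  γ : ℝ → Pt
  /-- the tangent vector `γ'` -/
  tang : ℝ → Pt
  /-- the signed curvature -/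
  k : ℝ → ℝ
  per_γ : Function.Periodic γ L
  per_tang : Function.Periodic tang L
  per_k : Function.Periodic k L
  deriv_γ : ∀ s, HasDerivAt γ (tang s) s
  cont_tang : Continuous tang
  unit_speed : ∀ᵐ s : ℝ, ‖tang s‖ = 1
  /-- the curve is simple -/
  simple : InjOn γ (Ico 0 L)
  k_meas : Measurable k
  /-- `γ' ∈ W^{1,2}`, with weak derivative `γ'' = k • (rot90 ∘ γ')` -/
  sobolev : ∀ a b : ℝ, tang b - tang a = ∫ s in a..b, k s • rot90 (tang s)
  k_sq_int : IntervalIntegrable (fun s => k s ^ 2) volume 0 L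

namespace ClosedCurveW22

/-- The image (trace) of the curve. -/
def image (c : ClosedCurveW22) : Set Pt := c.γ '' Icc 0 c.L

/-- `Ω_γ`, the bounded open region enclosed by the curve. -/
def omega (c : ClosedCurveW22) : Set Pt := boundedComplement c.image

/-- `A(γ)`, the area enclosed by the curve. -/
def area (c : ClosedCurveW22) : ℝ := (volume c.omega).toReal

/-- `E(γ) = (1/2) ∫ k²`, the elastic energy of the curve. -/
def energy (c : ClosedCurveW22) : ℝ := (1 / 2) * ∫ s in (0:ℝ)..c.L, c.k s ^ 2

/-- The image of the curve is a circle. -/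
def IsCircle (c : ClosedCurveW22) : Prop :=
  ∃ (z : Pt) (r : ℝ), 0 < r ∧ c.image = Metric.sphere z r

end ClosedCurveW22

/-- A simple regular closed curve of class `C¹` and piecewise `C²`, parametrized by arc
length, encoded as an `L`-periodic map `ℝ → ℝ²`.  Away from the (periodically repeated)
finite exceptional set `F` the tangent `γ'` is differentiable with `γ'' = k • n`,
`n = rot90 ∘ γ'`, and the signed curvature `k` is continuous there and bounded. -/
structure PC2ClosedCurve where
  /-- the length of the curve -/
  L : ℝ
  L_pos : 0 < L
  /-- the curve, as an `L`-periodic map -/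
  γ : ℝ → Pt
  /-- the tangent vector `γ'` -/
  tang : ℝ → Pt
  /-- the signed curvature -/
  k : ℝ → ℝ
  per_γ : Function.Periodic γ L
  per_tang : Function.Periodic tang L
  per_k : Function.Periodic k L
  deriv_γ : ∀ s, HasDerivAt γ (tang s) s
  cont_tang : Continuous tang
  unit_speed : ∀ s, ‖tang s‖ = 1
  /-- the curve is simple -/
  simple : InjOn γ (Ico 0 L)
  /-- the finite exceptional set (within one period) -/
  F : Finset ℝ
  deriv_tang : ∀ s : ℝ, (∀ t ∈ F, ∀ m : ℤ, s ≠ t + m * L) →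
    HasDerivAt tang (k s • rot90 (tang s)) s
  cont_k : ∀ s : ℝ, (∀ t ∈ F, ∀ m : ℤ, s ≠ t + m * L) → ContinuousAt k s
  k_bdd : ∃ M : ℝ, ∀ s, |k s| ≤ M
  k_meas : Measurable k

namespace PC2ClosedCurve

/-- The image (trace) of the curve. -/
def image (c : PC2ClosedCurve) : Set Pt := c.γ '' Icc 0 c.L

/-- `Ω_γ`, the bounded open region enclosed by the curve. -/
def omega (c : PC2ClosedCurve) : Set Pt := boundedComplement c.image

/-- `A(γ)`, the area enclosed by the curve. -/
def area (c : PC2ClosedCurve) : ℝ := (volume c.omega).toReal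

/-- `E(γ) = (1/2) ∫ k²`, the elastic energy of the curve. -/
def energy (c : PC2ClosedCurve) : ℝ := (1 / 2) * ∫ s in (0:ℝ)..c.L, c.k s ^ 2

/-- The image of the curve is a circle. -/
def IsCircle (c : PC2ClosedCurve) : Prop :=
  ∃ (z : Pt) (r : ℝ), 0 < r ∧ c.image = Metric.sphere z r

/-- Positive (counterclockwise) orientation: the Gauss–Green signed area of the curve
equals the enclosed area, i.e. the inner normal `rot90 ∘ γ'` points into `Ω_γ`. -/
def PositivelyOriented (c : PC2ClosedCurve) : Prop :=
  (1 / 2) * (∫ s in (0:ℝ)..c.L, (c.γ s 0 * c.tang s 1 - c.γ s 1 * c.tang s 0)) = c.area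

/-- The signed curvature changes sign only finitely many times: one period `[0, L]`
splits into finitely many intervals on each of which `k ≥ 0` or `k ≤ 0`. -/
def FiniteSignChanges (c : PC2ClosedCurve) : Prop :=
  ∃ (n : ℕ) (t : ℕ → ℝ), t 0 = 0 ∧ t n = c.L ∧ (∀ i, i < n → t i ≤ t (i + 1)) ∧
    ∀ i, i < n →
      (∀ s ∈ Icc (t i) (t (i + 1)), 0 ≤ c.k s) ∨ (∀ s ∈ Icc (t i) (t (i + 1)), c.k s ≤ 0)

/-- The total curvature `∫ k` of the arc `γ|_[a,b]`. -/
def totalCurv (c : PC2ClosedCurve) (a b : ℝ) : ℝ := ∫ s in a..b, c.k s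

/-- The arc `γ|_[a,b]` is convex: `k ≥ 0` on it and `k` is not identically zero there. -/
def IsConvexArc (c : PC2ClosedCurve) (a b : ℝ) : Prop :=
  a < b ∧ b - a ≤ c.L ∧ (∀ s ∈ Icc a b, 0 ≤ c.k s) ∧ ¬(∀ s ∈ Icc a b, c.k s = 0)

/-- The arc `γ|_[a,b]` is concave: `k ≤ 0` on it and `k` is not identically zero there. -/
def IsConcaveArc (c : PC2ClosedCurve) (a b : ℝ) : Prop :=
  a < b ∧ b - a ≤ c.L ∧ (∀ s ∈ Icc a b, c.k s ≤ 0) ∧ ¬(∀ s ∈ Icc a b, c.k s = 0)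

/-- A maximal convex arc: a convex arc such that no convex arc containing it has total
curvature of strictly larger absolute value. -/
def IsMaxConvexArc (c : PC2ClosedCurve) (a b : ℝ) : Prop :=
  c.IsConvexArc a b ∧ ∀ a' b' : ℝ, c.IsConvexArc a' b' → a' ≤ a → b ≤ b' →
    |c.totalCurv a' b'| ≤ |c.totalCurv a b|

/-- A maximal concave arc: a concave arc such that no concave arc containing it has total
curvature of strictly larger absolute value. -/
def IsMaxConcaveArc (c : PC2ClosedCurve) (a b : ℝ) : Prop :=
  c.IsConcaveArc a b ∧ ∀ a' b' : ℝ, c.IsConcaveArc a' b' → a' ≤ a → b ≤ b' →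
    |c.totalCurv a' b'| ≤ |c.totalCurv a b|

/-- The class `K_π`: every maximal convex arc has total curvature `> π` and every maximal
concave arc has total curvature in `(-π, 0)`. -/
def KPi (c : PC2ClosedCurve) : Prop :=
  (∀ a b : ℝ, c.IsMaxConvexArc a b → π < c.totalCurv a b) ∧
  (∀ a b : ℝ, c.IsMaxConcaveArc a b →
    -π < c.totalCurv a b ∧ c.totalCurv a b < 0)

/-- The arc of `γ` from `γ a` to `γ b` holds the open convex set `K`: `K ⊆ Ω_γ` is a
bounded open convex set whose boundary is the union of the chord from `γ a` to `γ b`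
and the arc, and the tangents at the two endpoints are parallel (as lines). -/
def Holds (c : PC2ClosedCurve) (a b : ℝ) (K : Set Pt) : Prop :=
  a < b ∧ b - a ≤ c.L ∧ IsOpen K ∧ Convex ℝ K ∧ Bornology.IsBounded K ∧ K ⊆ c.omega ∧
  frontier K = segment ℝ (c.γ a) (c.γ b) ∪ c.γ '' Icc a b ∧
  ∃ t : ℝ, c.tang b = t • c.tang a

end PC2ClosedCurve

/-- An open arc of class `C¹` and piecewise `C²`, parametrized by arc length on `[0, l]`,
with tangent `tang = α'` and curvature `k` (so that `α'' = k • rot90 ∘ α'`, hence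
`‖α''‖ = |k|`), the curvature being continuous away from a finite set and bounded. -/
structure PC2Arc where
  /-- the length of the arc -/
  l : ℝ
  l_pos : 0 < l
  /-- the arc -/
  γ : ℝ → Pt
  /-- the tangent vector `α'` -/
  tang : ℝ → Pt
  /-- the signed curvature -/
  k : ℝ → ℝ
  deriv_γ : ∀ s ∈ Icc (0:ℝ) l, HasDerivWithinAt γ (tang s) (Icc 0 l) s
  cont_tang : ContinuousOn tang (Icc 0 l)
  unit_speed : ∀ s ∈ Icc (0:ℝ) l, ‖tang s‖ = 1
  /-- the finite exceptional set -/
  F : Finset ℝ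
  deriv_tang : ∀ s ∈ Icc (0:ℝ) l, s ∉ F →
    HasDerivWithinAt tang (k s • rot90 (tang s)) (Icc 0 l) s
  cont_k : ContinuousOn k (Icc 0 l \ F)
  k_bdd : ∃ M : ℝ, ∀ s ∈ Icc (0:ℝ) l, |k s| ≤ M
  k_meas : Measurable k

namespace PC2Arc

/-- `E(α) = (1/2) ∫ ‖α''‖² = (1/2) ∫ k²`, the elastic energy of the arc. -/
def energy (α : PC2Arc) : ℝ := (1 / 2) * ∫ s in (0:ℝ)..α.l, α.k s ^ 2

/-- The arc `α` holds the bounded open convex set `Ω`: the boundary of `Ω` is the union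
of the image of `α` and the closed segment joining its endpoints, and the tangent vectors
at the endpoints are parallel (as lines). -/
def Holds (α : PC2Arc) (Ω : Set Pt) : Prop :=
  IsOpen Ω ∧ Convex ℝ Ω ∧ Bornology.IsBounded Ω ∧
  frontier Ω = α.γ '' Icc 0 α.l ∪ segment ℝ (α.γ 0) (α.γ α.l) ∧
  ∃ t : ℝ, α.tang α.l = t • α.tang 0

end PC2Arc

/-!
A nonpositive arc extends to a maximal concave arc, which only lowers `∫ k`; so its total
curvature is `> -π`. Suppose a subarc `[x, b]` had `∫ k ≤ -π`, with `x` as large as possible.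
Unless `k ≤ 0` on all of `[x, b]`, the arc begins with a nonpositive stretch `[x, z]` followed by
a bump where `k ≥ 0`. That bump extends to a maximal convex arc `[P, Q]`, with `∫ k > π`; hence
`∫ k ≥ 0` over `[x, Q]`, while `[Q, b]` satisfies the claim by the choice of `x`. Finitely many
sign changes are used only through the local constancy of the sign of `k`, which guarantees that
maximal arcs are attained by closed intervals.
-/

open intervalIntegral

def SignConstOn (f : ℝ → ℝ) (s : Set ℝ) : Prop :=
  (∀ x ∈ s, 0 ≤ f x) ∨ ∀ x ∈ s, f x ≤ 0

lemma SignConstOn.comp {f g : ℝ → ℝ} {s t : Set ℝ} (h : SignConstOn f t) (hg : MapsTo g s t) :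
    SignConstOn (f ∘ g) s := by
  rcases h with h | h
  · exact Or.inl fun x hx => h _ (hg hx)
  · exact Or.inr fun x hx => h _ (hg hx)

lemma SignConstOn.congr {f g : ℝ → ℝ} {s : Set ℝ} (h : SignConstOn f s) (hfg : EqOn f g s) :
    SignConstOn g s := by
  rcases h with h | h
  · exact Or.inl fun x hx => hfg hx ▸ h x hx
  · exact Or.inr fun x hx => hfg hx ▸ h x hx

lemma SignConstOn.neg {f : ℝ → ℝ} {s : Set ℝ} (h : SignConstOn f s) :
    SignConstOn (fun x => -f x) s := by
  rcases h with h | h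
  · exact Or.inr fun x hx => neg_nonpos.2 (h x hx)
  · exact Or.inl fun x hx => neg_nonneg.2 (h x hx)

lemma intervalIntegral.integral_nonpos {f : ℝ → ℝ} {a b : ℝ} (hab : a ≤ b)
    (hf : ∀ x ∈ Icc a b, f x ≤ 0) : ∫ x in a..b, f x ≤ 0 := by
  simpa using intervalIntegral.integral_nonneg (f := fun x => -f x) hab
    fun x hx => neg_nonneg.2 (hf x hx)

lemma Nat.exists_lt_not_and_succ {p : ℕ → Prop} {n : ℕ} (h0 : ¬p 0) (hn : p n) :
    ∃ i < n, ¬p i ∧ p (i + 1) := by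
  induction n with
  | zero => exact absurd hn h0
  | succ n ih =>
    by_cases h : p n
    · obtain ⟨i, hi, hpi⟩ := ih h
      exact ⟨i, by omega, hpi⟩
    · exact ⟨n, by omega, h, hn⟩

section Extension

variable {f : ℝ → ℝ}

lemma exists_max_integral_nonneg_left (hf : ∀ x y, IntervalIntegrable f volume x y)
    (hloc : ∀ z, ∃ q > z, SignConstOn f (Icc z q)) {lo u : ℝ} (hlo : lo ≤ u) (hu : 0 ≤ f u) :
    ∃ A ∈ Icc lo u, (∀ s ∈ Icc A u, 0 ≤ f s) ∧
      ∀ x ∈ Icc lo u, (∀ s ∈ Icc x u, 0 ≤ f s) → ∫ s in x..u, f s ≤ ∫ s in A..u, f s := by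
  set X := {x ∈ Icc lo u | ∀ s ∈ Icc x u, 0 ≤ f s}
  have huX : u ∈ X := ⟨⟨hlo, le_rfl⟩, fun s hs => le_antisymm hs.2 hs.1 ▸ hu⟩
  have hbdd : BddBelow X := ⟨lo, fun x hx => hx.1.1⟩
  set a₀ := sInf X
  have ha₀ : a₀ ∈ Icc lo u := ⟨le_csInf ⟨u, huX⟩ fun x hx => hx.1.1, csInf_le hbdd huX⟩
  have hpos : ∀ s ∈ Ioc a₀ u, 0 ≤ f s := fun s hs => by
    obtain ⟨x, hx, hxs⟩ := exists_lt_of_csInf_lt ⟨u, huX⟩ hs.1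
    exact hx.2 s ⟨hxs.le, hs.2⟩
  suffices ∃ A ∈ X, ∀ x ∈ X, 0 ≤ ∫ s in A..x, f s by
    obtain ⟨A, hA, hmax⟩ := this
    refine ⟨A, hA.1, hA.2, fun x hx hxu => ?_⟩
    linarith [hmax x ⟨hx, hxu⟩, integral_add_adjacent_intervals (hf A x) (hf x u)]
  obtain ⟨q, hq, hnonneg | hnonpos⟩ := hloc a₀
  · have ha₀X : a₀ ∈ X := ⟨ha₀, fun s hs => (eq_or_lt_of_le hs.1).elim
      (fun h => h ▸ hnonneg a₀ ⟨le_rfl, hq.le⟩) fun h => hpos s ⟨h, hs.2⟩⟩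
    exact ⟨a₀, ha₀X, fun x hx => intervalIntegral.integral_nonneg (csInf_le hbdd hx)
      fun s hs => ha₀X.2 s ⟨hs.1, hs.2.trans hx.1.2⟩⟩
  · rcases eq_or_lt_of_le ha₀.2 with ha₀u | ha₀u
    · refine ⟨u, huX, fun x hx => ?_⟩
      rw [le_antisymm hx.1.2 (ha₀u ▸ csInf_le hbdd hx), integral_same]
    -- `f` vanishes on `(a₀, A]`, so `A` does as well as any admissible left end
    set A := min q u
    have hA : a₀ < A := lt_min hq ha₀u
    have hAX : A ∈ X :=
      ⟨⟨ha₀.1.trans hA.le, min_le_right _ _⟩, fun s hs => hpos s ⟨hA.trans_le hs.1, hs.2⟩⟩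
    refine ⟨A, hAX, fun x hx => ?_⟩
    rcases le_or_gt A x with hAx | hxA
    · exact intervalIntegral.integral_nonneg hAx fun s hs => hAX.2 s ⟨hs.1, hs.2.trans hx.1.2⟩
    · rw [integral_symm, neg_nonneg]
      exact intervalIntegral.integral_nonpos hxA.le fun s hs =>
        hnonpos s ⟨(csInf_le hbdd hx).trans hs.1, hs.2.trans (min_le_left _ _)⟩

lemma exists_max_integral_nonneg_right (hf : ∀ x y, IntervalIntegrable f volume x y)
    (hloc : ∀ z, ∃ p < z, SignConstOn f (Icc p z)) {v hi : ℝ} (hhi : v ≤ hi) (hv : 0 ≤ f v) :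
    ∃ B ∈ Icc v hi, (∀ s ∈ Icc v B, 0 ≤ f s) ∧
      ∀ y ∈ Icc v hi, (∀ s ∈ Icc v y, 0 ≤ f s) → ∫ s in v..y, f s ≤ ∫ s in v..B, f s := by
  have hloc' : ∀ z, ∃ q > z, SignConstOn (fun s => f (-s)) (Icc z q) := fun z => by
    obtain ⟨p, hp, hsign⟩ := hloc (-z)
    exact ⟨-p, by linarith, hsign.comp fun s (hs : s ∈ Icc z (-p)) =>
      ⟨by linarith [hs.2], by linarith [hs.1]⟩⟩
  obtain ⟨A, hA, hAnn, hmax⟩ := exists_max_integral_nonneg_left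
    (fun x y => by simpa using (IntervalIntegrable.iff_comp_neg).1 (hf (-x) (-y))) hloc'
    (neg_le_neg hhi) (by simpa using hv)
  refine ⟨-A, ⟨by linarith [hA.2], by linarith [hA.1]⟩,
    fun s hs => by simpa using hAnn (-s) ⟨by linarith [hs.2], by linarith [hs.1]⟩,
    fun y hy hyy => ?_⟩
  have := hmax (-y) ⟨by linarith [hy.2], by linarith [hy.1]⟩
    fun s hs => by simpa using hyy (-s) ⟨by linarith [hs.2], by linarith [hs.1]⟩
  simpa [integral_comp_neg] using this

lemma exists_max_integral_nonneg_extension (hf : ∀ x y, IntervalIntegrable f volume x y)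
    (hright : ∀ z, ∃ q > z, SignConstOn f (Icc z q))
    (hleft : ∀ z, ∃ p < z, SignConstOn f (Icc p z)) {L u v : ℝ} (huv : u ≤ v)
    (hlen : v - u ≤ L) (hnn : ∀ s ∈ Icc u v, 0 ≤ f s) :
    ∃ A B, A ≤ u ∧ v ≤ B ∧ B - A ≤ L ∧ (∀ s ∈ Icc A B, 0 ≤ f s) ∧
      ∀ A' B', A' ≤ A → B ≤ B' → B' - A' ≤ L → (∀ s ∈ Icc A' B', 0 ≤ f s) →
        ∫ s in A'..B', f s ≤ ∫ s in A..B, f s := by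
  obtain ⟨A, ⟨hA₁, hA₂⟩, hAnn, hAmax⟩ :=
    exists_max_integral_nonneg_left hf hright (by linarith : v - L ≤ u) (hnn u ⟨le_rfl, huv⟩)
  obtain ⟨B, ⟨hB₁, hB₂⟩, hBnn, hBmax⟩ :=
    exists_max_integral_nonneg_right hf hleft (by linarith : v ≤ u + L) (hnn v ⟨huv, le_rfl⟩)
  have hABnn : ∀ s ∈ Icc A B, 0 ≤ f s := fun s hs => by
    rcases le_total s u with hsu | hus
    · exact hAnn s ⟨hs.1, hsu⟩
    rcases le_total s v with hsv | hvs
    · exact hnn s ⟨hus, hsv⟩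
    · exact hBnn s ⟨hvs, hs.2⟩
  have hsplit : ∀ x y, ∫ s in x..y, f s =
      (∫ s in x..u, f s) + (∫ s in u..v, f s) + ∫ s in v..y, f s := fun x y => by
    rw [integral_add_adjacent_intervals (hf x u) (hf u v),
      integral_add_adjacent_intervals (hf x v) (hf v y)]
  rcases le_or_gt (B - A) L with hAB | hAB
  · refine ⟨A, B, hA₂, hB₁, hAB, hABnn, fun A' B' hA' hB' hlen' hnn' => ?_⟩
    have hleft := hAmax A' ⟨by linarith, by linarith⟩
      fun s hs => hnn' s ⟨hs.1, by linarith [hs.2]⟩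
    have hright := hBmax B' ⟨by linarith, by linarith⟩
      fun s hs => hnn' s ⟨by linarith [hs.1], hs.2⟩
    rw [hsplit A' B', hsplit A B]
    linarith
  · refine ⟨B - L, B, by linarith, hB₁, by linarith,
      fun s hs => hABnn s ⟨by linarith [hs.1], hs.2⟩, fun A' B' hA' hB' hlen' _ => ?_⟩
    rw [show A' = B - L by linarith, show B' = B by linarith]

end Extension

lemma exists_nonpos_Ico_nonneg_Icc {f : ℝ → ℝ} (hloc : ∀ z, ∃ q > z, SignConstOn f (Icc z q))
    {x b ε : ℝ} (hε : 0 < ε) (hpos : ∃ s ∈ Icc x b, 0 < f s) :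
    ∃ z ∈ Icc x b, ∃ q, z < q ∧ q ≤ z + ε ∧ (∀ s ∈ Ico x z, f s ≤ 0) ∧
      (∀ s ∈ Icc z q, 0 ≤ f s) ∧ ∃ s ∈ Icc z q, f s ≠ 0 := by
  set S := {s ∈ Icc x b | 0 < f s}
  obtain ⟨s₀, hs₀⟩ : S.Nonempty := hpos
  have hbdd : BddBelow S := ⟨x, fun s hs => hs.1.1⟩
  set z := sInf S
  have hz : z ∈ Icc x b :=
    ⟨le_csInf ⟨s₀, hs₀⟩ fun s hs => hs.1.1, (csInf_le hbdd hs₀).trans hs₀.1.2⟩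
  obtain ⟨q, hq, hsign⟩ := hloc z
  obtain ⟨s, hsS, hsq⟩ :=
    exists_lt_of_csInf_lt ⟨s₀, hs₀⟩ (lt_min hq (by linarith) : z < min q (z + ε))
  have hs : s ∈ Icc z (min q (z + ε)) := ⟨csInf_le hbdd hsS, hsq.le⟩
  have hsub : Icc z (min q (z + ε)) ⊆ Icc z q := Icc_subset_Icc_right (min_le_left _ _)
  refine ⟨z, hz, min q (z + ε), lt_min hq (by linarith), min_le_right _ _,
    fun t ht => not_lt.1 fun hft => not_lt.2 (csInf_le hbdd ⟨⟨ht.1, ht.2.le.trans hz.2⟩, hft⟩) ht.2,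
    ?_, s, hs, hsS.2.ne'⟩
  rcases hsign with h | h
  · exact fun t ht => h t (hsub ht)
  · exact absurd (h s (hsub hs)) (not_le.2 hsS.2)

lemma exists_last_le_of_continuous {g : ℝ → ℝ} (hg : Continuous g) {a b C : ℝ} (hab : a ≤ b)
    (ha : g a ≤ C) : ∃ x ∈ Icc a b, g x ≤ C ∧ ∀ y ∈ Ioc x b, C < g y := by
  set S := {x ∈ Icc a b | g x ≤ C}
  have hbdd : BddAbove S := ⟨b, fun x hx => hx.1.2⟩
  have hx : sSup S ∈ S :=
    (isClosed_Icc.inter (isClosed_le hg continuous_const)).csSup_mem ⟨a, ⟨le_rfl, hab⟩, ha⟩ hbdd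
  exact ⟨sSup S, hx.1, hx.2, fun y hy => not_le.1 fun hgy =>
    not_lt.2 (le_csSup hbdd ⟨⟨hx.1.1.trans hy.1.le, hy.2⟩, hgy⟩) hy.1⟩

namespace PC2ClosedCurve

variable (c : PC2ClosedCurve)

lemma intervalIntegrable_k (x y : ℝ) : IntervalIntegrable c.k volume x y := by
  obtain ⟨M, hM⟩ := c.k_bdd
  exact (intervalIntegrable_const (c := M)).mono_fun' c.k_meas.aestronglyMeasurable
    (Eventually.of_forall fun s => (Real.norm_eq_abs _).trans_le (hM s))

lemma integral_k_add_adjacent (a b d : ℝ) :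
    (∫ s in a..b, c.k s) + ∫ s in b..d, c.k s = ∫ s in a..d, c.k s :=
  integral_add_adjacent_intervals (c.intervalIntegrable_k a b) (c.intervalIntegrable_k b d)

variable {c}

lemma FiniteSignChanges.exists_signConstOn_right (hsign : c.FiniteSignChanges) (z : ℝ) :
    ∃ q > z, SignConstOn c.k (Icc z q) := by
  obtain ⟨n, t, ht0, htn, -, hcell⟩ := hsign
  have hz₀ := toIcoMod_mem_Ico c.L_pos 0 z
  have hshift := self_sub_toIcoMod c.L_pos 0 z
  generalize toIcoMod c.L_pos 0 z = z₀ at hz₀ hshift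
  rw [zero_add] at hz₀
  obtain ⟨i, hi, hti, hti'⟩ := Nat.exists_lt_not_and_succ (p := fun j => z₀ < t j) (n := n)
    (by simpa [ht0] using hz₀.1) (by simpa [htn] using hz₀.2)
  refine ⟨t (i + 1) + (z - z₀), by linarith,
    (SignConstOn.comp (g := (· - (z - z₀))) (hcell i hi) fun s (hs : s ∈ Icc z _) =>
      ⟨by linarith [hs.1, not_lt.1 hti], by linarith [hs.2]⟩).congr
    fun s _ => ?_⟩
  rw [Function.comp_apply, hshift]
  exact c.per_k.sub_zsmul_eq _

lemma FiniteSignChanges.exists_signConstOn_left (hsign : c.FiniteSignChanges) (z : ℝ) :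
    ∃ p < z, SignConstOn c.k (Icc p z) := by
  obtain ⟨n, t, ht0, htn, -, hcell⟩ := hsign
  have hz₀ := toIocMod_mem_Ioc c.L_pos 0 z
  have hshift := self_sub_toIocMod c.L_pos 0 z
  generalize toIocMod c.L_pos 0 z = z₀ at hz₀ hshift
  rw [zero_add] at hz₀
  obtain ⟨i, hi, hti, hti'⟩ := Nat.exists_lt_not_and_succ (p := fun j => z₀ ≤ t j) (n := n)
    (by simpa [ht0] using hz₀.1) (by simpa [htn] using hz₀.2)
  refine ⟨t i + (z - z₀), by linarith [not_le.1 hti],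
    (SignConstOn.comp (g := (· - (z - z₀))) (hcell i hi) fun s (hs : s ∈ Icc _ z) =>
      ⟨by linarith [hs.1], by linarith [hs.2, show z₀ ≤ t (i + 1) from hti']⟩).congr
    fun s _ => ?_⟩
  rw [Function.comp_apply, hshift]
  exact c.per_k.sub_zsmul_eq _

lemma exists_isMaxConvexArc (hsign : c.FiniteSignChanges) {u v : ℝ} (huv : u < v)
    (hlen : v - u ≤ c.L) (hnn : ∀ s ∈ Icc u v, 0 ≤ c.k s) (hne : ∃ s ∈ Icc u v, c.k s ≠ 0) :
    ∃ P Q, P ≤ u ∧ v ≤ Q ∧ (∀ s ∈ Icc P Q, 0 ≤ c.k s) ∧ c.IsMaxConvexArc P Q := by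
  obtain ⟨P, Q, hPu, hvQ, hlen', hPQ, hmax⟩ := exists_max_integral_nonneg_extension
    c.intervalIntegrable_k hsign.exists_signConstOn_right hsign.exists_signConstOn_left
    huv.le hlen hnn
  obtain ⟨s, hs, hks⟩ := hne
  refine ⟨P, Q, hPu, hvQ, hPQ, ⟨by linarith, hlen', hPQ, fun h => hks (h s ⟨by linarith [hs.1],
    by linarith [hs.2]⟩)⟩, fun a' b' ⟨_, hlen'', hnn', _⟩ ha' hb' => ?_⟩
  rw [totalCurv, totalCurv, abs_of_nonneg (intervalIntegral.integral_nonneg (by linarith) hnn'),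
    abs_of_nonneg (intervalIntegral.integral_nonneg (by linarith) hPQ)]
  exact hmax a' b' ha' hb' hlen'' hnn'

lemma exists_isMaxConcaveArc (hsign : c.FiniteSignChanges) {u v : ℝ} (huv : u < v)
    (hlen : v - u ≤ c.L) (hnp : ∀ s ∈ Icc u v, c.k s ≤ 0) (hne : ∃ s ∈ Icc u v, c.k s ≠ 0) :
    ∃ P Q, P ≤ u ∧ v ≤ Q ∧ (∀ s ∈ Icc P Q, c.k s ≤ 0) ∧ c.IsMaxConcaveArc P Q := by
  obtain ⟨P, Q, hPu, hvQ, hlen', hPQ, hmax⟩ := exists_max_integral_nonneg_extension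
    (fun x y => (c.intervalIntegrable_k x y).neg)
    (fun z => (hsign.exists_signConstOn_right z).imp fun _ h => ⟨h.1, h.2.neg⟩)
    (fun z => (hsign.exists_signConstOn_left z).imp fun _ h => ⟨h.1, h.2.neg⟩)
    huv.le hlen fun s hs => neg_nonneg.2 (hnp s hs)
  have hPQ' : ∀ s ∈ Icc P Q, c.k s ≤ 0 := fun s hs => neg_nonneg.1 (hPQ s hs)
  obtain ⟨s, hs, hks⟩ := hne
  refine ⟨P, Q, hPu, hvQ, hPQ', ⟨by linarith, hlen', hPQ', fun h => hks (h s ⟨by linarith [hs.1],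
    by linarith [hs.2]⟩)⟩, fun a' b' ⟨_, hlen'', hnp', _⟩ ha' hb' => ?_⟩
  rw [totalCurv, totalCurv, abs_of_nonpos (intervalIntegral.integral_nonpos (by linarith) hnp'),
    abs_of_nonpos (intervalIntegral.integral_nonpos (by linarith) hPQ'),
    ← intervalIntegral.integral_neg, ← intervalIntegral.integral_neg]
  exact hmax a' b' ha' hb' hlen'' fun s hs => neg_nonneg.2 (hnp' s hs)

lemma neg_pi_lt_integral_of_nonpos (hsign : c.FiniteSignChanges) (hKpi : c.KPi) {u v : ℝ}
    (huv : u ≤ v) (hlen : v - u ≤ c.L) (hnp : ∀ s ∈ Icc u v, c.k s ≤ 0) :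
    -π < ∫ s in u..v, c.k s := by
  by_cases hne : u < v ∧ ∃ s ∈ Icc u v, c.k s ≠ 0
  · obtain ⟨P, Q, hPu, hvQ, hPQ, hmax⟩ := c.exists_isMaxConcaveArc hsign hne.1 hlen hnp hne.2
    have hπ : -π < ∫ s in P..Q, c.k s := (hKpi.2 P Q hmax).1
    have hPu' := intervalIntegral.integral_nonpos hPu
      fun s hs => hPQ s ⟨hs.1, hs.2.trans (huv.trans hvQ)⟩
    have hvQ' := intervalIntegral.integral_nonpos hvQ
      fun s hs => hPQ s ⟨hPu.trans (huv.trans hs.1), hs.2⟩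
    linarith [c.integral_k_add_adjacent P u v, c.integral_k_add_adjacent P v Q]
  · have hzero : ∫ s in u..v, c.k s = 0 := by
      rcases eq_or_lt_of_le huv with rfl | huv'
      · exact integral_same
      · push Not at hne
        rw [integral_congr fun s hs => hne huv' s (uIcc_of_le huv ▸ hs)]
        simp
    linarith [pi_pos]

/-- If `k v > 0`, then `k ≥ 0` just left of `v`, and cutting the arc there only lowers `∫ k`. -/
lemma neg_pi_lt_integral_of_nonpos_Ico (hsign : c.FiniteSignChanges) (hKpi : c.KPi) {u v : ℝ}
    (huv : u ≤ v) (hlen : v - u ≤ c.L) (hnp : ∀ s ∈ Ico u v, c.k s ≤ 0) :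
    -π < ∫ s in u..v, c.k s := by
  rcases eq_or_lt_of_le huv with rfl | huv
  · simp [pi_pos]
  obtain ⟨p, hp, hnn | hnp'⟩ := hsign.exists_signConstOn_left v
  · have hw : max p u < v := max_lt hp huv
    have h₁ := c.neg_pi_lt_integral_of_nonpos hsign hKpi (le_max_right p u)
      (by linarith [le_max_right p u]) fun s hs => hnp s ⟨hs.1, hs.2.trans_lt hw⟩
    have h₂ : 0 ≤ ∫ s in max p u..v, c.k s := intervalIntegral.integral_nonneg hw.le
      fun s hs => hnn s ⟨(le_max_left p u).trans hs.1, hs.2⟩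
    linarith [c.integral_k_add_adjacent u (max p u) v]
  · exact c.neg_pi_lt_integral_of_nonpos hsign hKpi huv.le hlen fun s hs =>
      (eq_or_lt_of_le hs.2).elim (fun h => h ▸ hnp' v ⟨hp.le, le_rfl⟩) fun h => hnp s ⟨hs.1, h⟩

lemma neg_pi_lt_integral_of_forall_Ioc (hsign : c.FiniteSignChanges) (hKpi : c.KPi) {x b : ℝ}
    (hxb : x ≤ b) (hlen : b - x ≤ c.L) (hright : ∀ y ∈ Ioc x b, -π < ∫ s in y..b, c.k s) :
    -π < ∫ s in x..b, c.k s := by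
  by_cases hnp : ∀ s ∈ Icc x b, c.k s ≤ 0
  · exact c.neg_pi_lt_integral_of_nonpos hsign hKpi hxb hlen hnp
  push Not at hnp
  obtain ⟨z, hz, q, hzq, hqz, hneg, hnn, hne⟩ :=
    exists_nonpos_Ico_nonneg_Icc hsign.exists_signConstOn_right c.L_pos hnp
  obtain ⟨P, Q, hPz, hqQ, hPQ, hmax⟩ :=
    c.exists_isMaxConvexArc hsign hzq (by linarith) hnn hne
  have hπ : π < ∫ s in P..Q, c.k s := hKpi.1 P Q hmax
  have hxz := c.neg_pi_lt_integral_of_nonpos_Ico hsign hKpi hz.1 (by linarith [hz.2]) hneg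
  rcases le_or_gt b Q with hbQ | hQb
  · have : 0 ≤ ∫ s in z..b, c.k s :=
      intervalIntegral.integral_nonneg hz.2 fun s hs => hPQ s ⟨hPz.trans hs.1, hs.2.trans hbQ⟩
    linarith [c.integral_k_add_adjacent x z b]
  have hxQ : 0 ≤ ∫ s in x..Q, c.k s := by
    rcases le_or_gt P x with hPx | hxP
    · exact intervalIntegral.integral_nonneg (by linarith [hz.1])
        fun s hs => hPQ s ⟨hPx.trans hs.1, hs.2⟩
    · have := c.neg_pi_lt_integral_of_nonpos_Ico hsign hKpi hxP.le (by linarith [hz.2])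
        fun s hs => hneg s ⟨hs.1, hs.2.trans_le hPz⟩
      linarith [c.integral_k_add_adjacent x P Q]
  linarith [hright Q ⟨by linarith [hz.1], hQb.le⟩, c.integral_k_add_adjacent x Q b]

end PC2ClosedCurve

theorem statement10_general (c : PC2ClosedCurve)
    (hsign : c.FiniteSignChanges) (hKpi : c.KPi) :
    ∀ a b : ℝ, a ≤ b → b - a ≤ c.L → -π < ∫ s in a..b, c.k s := by
  intro a b hab hlen
  by_contra! hbad
  have hcont : Continuous fun x => ∫ s in x..b, c.k s :=
    (continuous_primitive c.intervalIntegrable_k b).neg.congr fun x => (integral_symm b x).symm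
  obtain ⟨x, hx, hxbad, hgood⟩ := exists_last_le_of_continuous hcont hab hbad
  exact not_lt.2 hxbad <| c.neg_pi_lt_integral_of_forall_Ioc hsign hKpi hx.2
    (by linarith [hx.1]) hgood

/-- for a positively oriented simple closed curve of class `C¹`, piecewise
`C²`, with finitely many sign changes of curvature and belonging to the class `K_π`,
every subarc has total curvature strictly greater than `−π`. -/
theorem statement10 (c : PC2ClosedCurve) (hpos : c.PositivelyOriented)
    (hsign : c.FiniteSignChanges) (hKpi : c.KPi) :
    ∀ a b : ℝ, a ≤ b → b - a ≤ c.L → -π < ∫ s in a..b, c.k s :=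
  statement10_general c hsign hKpi
end
end

section
/- The inequality A·E² ≥ π³ fails for non-simply-connected domains: for every ε > 0 there exist radii 0 < r < R such that the annulus bounded by two concentric circles of radii r and R satisfies Area · Energy² < ε, where Area = π(R² − r²) is the area of the annulus and Energy = π/r + π/R is the total elastic energy of its two boundary circles (each circle of radius ρ having elastic energy (1/2)·(2πρ)·(1/ρ²) = π/ρ). In particular the infimum of Area · Energy² over all annuli is 0 < π³. -/
open MeasureTheory Set Real Filter
open scoped RealInnerProductSpace Topology

noncomputable section

/- For thin annuli the area tends to `0` while the energy stays close to that of two unit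
circles: with inner radius `1`, `A·E² = π (R² - 1) (π + π/R)²` is continuous in `R` and
vanishes at `R = 1`. -/

lemma annulus_area_mul_energy_sq_nonneg {r R : ℝ} (hrR : r ≤ R) (hr : 0 ≤ r) :
    0 ≤ π * (R ^ 2 - r ^ 2) * (π / r + π / R) ^ 2 := by
  have : r ^ 2 ≤ R ^ 2 := pow_le_pow_left₀ hr hrR 2
  have := pi_pos
  positivity

lemma exists_annulus_area_mul_energy_sq_lt {ε : ℝ} (hε : 0 < ε) :
    ∃ r R : ℝ, 0 < r ∧ r < R ∧ π * (R ^ 2 - r ^ 2) * (π / r + π / R) ^ 2 < ε := by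
  have hcont : ContinuousAt (fun R : ℝ => π * (R ^ 2 - 1 ^ 2) * (π / 1 + π / R) ^ 2) 1 := by
    fun_prop (disch := norm_num)
  have hlim : Tendsto (fun R : ℝ => π * (R ^ 2 - 1 ^ 2) * (π / 1 + π / R) ^ 2)
      (𝓝[>] 1) (𝓝 0) := by
    simpa using hcont.tendsto.mono_left nhdsWithin_le_nhds
  obtain ⟨R, hR, hlt⟩ :=
    (eventually_mem_nhdsWithin.and (hlim.eventually (gt_mem_nhds hε))).exists
  exact ⟨1, R, one_pos, hR, hlt⟩

/-- the inequality `A·E² ≥ π³` fails for annuli: the product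
`Area · Energy² = π(R² − r²)·(π/r + π/R)²` can be made arbitrarily small, so its
infimum over all annuli is `0 < π³`. -/
theorem statement14 :
    (∀ ε > (0:ℝ), ∃ r R : ℝ, 0 < r ∧ r < R ∧
      π * (R ^ 2 - r ^ 2) * (π / r + π / R) ^ 2 < ε) ∧
    sInf {x : ℝ | ∃ r R : ℝ, 0 < r ∧ r < R ∧
      x = π * (R ^ 2 - r ^ 2) * (π / r + π / R) ^ 2} = 0 ∧
    (0:ℝ) < π ^ 3 := by
  refine ⟨fun ε hε => exists_annulus_area_mul_energy_sq_lt hε, ?_, by positivity⟩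
  obtain ⟨r, R, hr, hrR, -⟩ := exists_annulus_area_mul_energy_sq_lt one_pos
  refine csInf_eq_of_forall_ge_of_forall_gt_exists_lt ⟨_, r, R, hr, hrR, rfl⟩ ?_ ?_
  · rintro _ ⟨r, R, hr, hrR, rfl⟩
    exact annulus_area_mul_energy_sq_nonneg hrR.le hr.le
  · intro ε hε
    obtain ⟨r, R, hr, hrR, hlt⟩ := exists_annulus_area_mul_energy_sq_lt hε
    exact ⟨_, ⟨r, R, hr, hrR, rfl⟩, hlt⟩
end
end
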